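/- (Convergence of the synchronous relaxed nonstationary multisplitting method.) Let A ∈ ℝ^{n×n} be an H₊-matrix, let D be its diagonal part and B = D − A, and set γ = ρ(D⁻¹B). Let ω ∈ (0, 2/(1+γ)). For i = 1, …, m, let A = M_i − N_i be splittings with ⟨A⟩ ≤ ⟨M_i⟩ − |N_i| entrywise, and let E₁, …, E_m be nonnegative diagonal matrices with Σ_{i=1}^m E_i = I. Let η = γ / (Σ_{i=1}^m ‖E_i‖), and suppose s̃ is a positive integer such that ‖(⟨M_i⟩⁻¹|N_i|)^s‖ ≤ η for all s ≥ s̃ and all i = 1, …, m, where ‖·‖ is the matrix ∞-norm. Let x* ∈ ℝⁿ be a solution of LCP(A, f). Let integers s(k,i) ≥ s̃ be given for all k ≥ 1 and i = 1, …, m, and define the sequence {x^k} by: given x^k, for each i set y^{0,i} = x^k and for j = 1, …, s(k,i) let y^{j,i} solve LCP(M_i, f + N_i y^{j−1,i}); then x^{k+1} = ω Σ_{i=1}^m E_i y^{s(k,i),i} + (1−ω) x^k. Then x^k converges to x* as k → ∞. -/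

import Mathlib

open Matrix Filter

noncomputable section

/-- Comparison matrix `⟨A⟩`: `α_ii = |a_ii|`, `α_ij = -|a_ij|` for `i ≠ j`. -/
def cmpMat {n : ℕ} (A : Matrix (Fin n) (Fin n) ℝ) : Matrix (Fin n) (Fin n) ℝ :=
  Matrix.of fun i j => if i = j then |A i j| else -|A i j|

/-- Entrywise absolute value of a matrix. -/
def absMat {n : ℕ} (A : Matrix (Fin n) (Fin n) ℝ) : Matrix (Fin n) (Fin n) ℝ :=
  Matrix.of fun i j => |A i j|

/-- `A` is an M-matrix: nonpositive off-diagonal entries, nonsingular,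
and entrywise nonnegative inverse. -/
def IsMMat {n : ℕ} (A : Matrix (Fin n) (Fin n) ℝ) : Prop :=
  (∀ i j, i ≠ j → A i j ≤ 0) ∧ IsUnit A.det ∧ ∀ i j, 0 ≤ A⁻¹ i j

/-- `A` is an H-matrix: its comparison matrix is an M-matrix. -/
def IsHMat {n : ℕ} (A : Matrix (Fin n) (Fin n) ℝ) : Prop := IsMMat (cmpMat A)

/-- `A` is an H₊-matrix: an H-matrix with positive diagonal entries. -/
def IsHpMat {n : ℕ} (A : Matrix (Fin n) (Fin n) ℝ) : Prop :=
  IsHMat A ∧ ∀ i, 0 < A i i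

/-- Spectral radius of a real matrix: supremum of moduli of its complex eigenvalues. -/
def specRad {n : ℕ} (A : Matrix (Fin n) (Fin n) ℝ) : ℝ :=
  sSup {r : ℝ | ∃ μ : ℂ, μ ∈ spectrum ℂ (A.map Complex.ofReal) ∧ r = ‖μ‖}

/-- Matrix ∞-norm: maximum absolute row sum. -/
def infNorm {n : ℕ} (A : Matrix (Fin n) (Fin n) ℝ) : ℝ :=
  ⨆ i, ∑ j, |A i j|

/-- `x` solves the linear complementarity problem LCP(A, f):
`x ≥ 0`, `Ax - f ≥ 0`, `xᵀ(Ax - f) = 0`. -/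
def SolvesLCP {n : ℕ} (A : Matrix (Fin n) (Fin n) ℝ) (f x : Fin n → ℝ) : Prop :=
  (∀ j, 0 ≤ x j) ∧ (∀ j, f j ≤ (A *ᵥ x) j) ∧ ∑ j, x j * ((A *ᵥ x) j - f j) = 0

end

/-!
Since `⟨A⟩` is an M-matrix there is `w > 0` with `⟨A⟩ w > 0`. The hypothesis
`⟨A⟩ ≤ ⟨M_i⟩ - |N_i|` then gives `⟨M_i⟩ w > 0`, so every `⟨M_i⟩` is an M-matrix, and a
Collatz–Wielandt bound with the same `w` gives `γ < 1`. Comparing two LCP solutions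
componentwise yields `⟨M⟩ |u - v| ≤ |f - g|`, so one inner sweep multiplies the error by at most
`⟨M_i⟩⁻¹ |N_i|`, and `s(k,i)` sweeps shrink its ∞-norm by `η ≤ γ` (as `∑ ‖E_i‖ ≥ 1`). Since the
`E_i` are a nonnegative diagonal partition of unity,
`‖x^{k+1} - x*‖ ≤ (ω γ + |1 - ω|) ‖x^k - x*‖`, and `ω γ + |1 - ω| < 1` for `0 < ω < 2 / (1 + γ)`.
-/

open Topology

section NonnegMatrix

variable {ι : Type*} [Fintype ι]

lemma mulVec_le_mulVec_of_nonneg {P : Matrix ι ι ℝ} (hP : ∀ p q, 0 ≤ P p q)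
    {u v : ι → ℝ} (huv : u ≤ v) : P *ᵥ u ≤ P *ᵥ v := fun p =>
  Finset.sum_le_sum fun q _ => mul_le_mul_of_nonneg_left (huv q) (hP p q)

lemma le_pow_mulVec_of_le_mulVec [DecidableEq ι] {T : Matrix ι ι ℝ} (hT : ∀ p q, 0 ≤ T p q)
    {e : ℕ → ι → ℝ} {s : ℕ} (he : ∀ j < s, e (j + 1) ≤ T *ᵥ e j) :
    e s ≤ T ^ s *ᵥ e 0 := by
  induction s with
  | zero => simp
  | succ s ih =>
    calc e (s + 1) ≤ T *ᵥ e s := he s s.lt_succ_self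
      _ ≤ T *ᵥ (T ^ s *ᵥ e 0) :=
        mulVec_le_mulVec_of_nonneg hT (ih fun j hj => he j (hj.trans s.lt_succ_self))
      _ = T ^ (s + 1) *ᵥ e 0 := by rw [mulVec_mulVec, pow_succ']

/-- A Collatz–Wielandt bound: compare at the index where `c / w` is maximal. -/
lemma le_of_mulVec_le_smul_of_smul_le_mulVec {P : Matrix ι ι ℝ} (hP : ∀ p q, 0 ≤ P p q)
    {w : ι → ℝ} (hw : ∀ p, 0 < w p) {θ : ℝ} (hPw : P *ᵥ w ≤ θ • w)
    {c : ι → ℝ} (hc : 0 ≤ c) (hc0 : c ≠ 0) {r : ℝ} (hrc : r • c ≤ P *ᵥ c) : r ≤ θ := by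
  obtain ⟨q, hq⟩ := Function.ne_iff.mp hc0
  obtain ⟨p, -, hp⟩ := Finset.univ.exists_max_image (fun p => c p / w p) ⟨q, Finset.mem_univ q⟩
  set t := c p / w p
  have ht : 0 < t := (div_pos ((hc q).lt_of_ne' hq) (hw q)).trans_le (hp q (Finset.mem_univ q))
  have hct : c ≤ t • w := fun q => (div_le_iff₀ (hw q)).mp (hp q (Finset.mem_univ q))
  have hcp : c p = t * w p := (div_mul_cancel₀ _ (hw p).ne').symm
  have key : r * (t * w p) ≤ θ * (t * w p) := calc
    r * (t * w p) = (r • c) p := by simp [hcp]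
    _ ≤ (P *ᵥ c) p := hrc p
    _ ≤ (P *ᵥ (t • w)) p := mulVec_le_mulVec_of_nonneg hP hct p
    _ = t * (P *ᵥ w) p := by simp [mulVec_smul]
    _ ≤ t * (θ * w p) := mul_le_mul_of_nonneg_left (hPw p) ht.le
    _ = θ * (t * w p) := by ring
  exact le_of_mul_le_mul_right key (mul_pos ht (hw p))

/-- The minimum principle behind M-matrices: look at the index where `v / w` is minimal. -/
lemma nonneg_of_mulVec_nonneg {B : Matrix ι ι ℝ} (hoff : ∀ p q, p ≠ q → B p q ≤ 0)
    {w : ι → ℝ} (hw : ∀ p, 0 < w p) (hBw : ∀ p, 0 < (B *ᵥ w) p)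
    {v : ι → ℝ} (hBv : 0 ≤ B *ᵥ v) : 0 ≤ v := by
  by_contra hneg
  obtain ⟨q, hq⟩ : ∃ q, v q < 0 := by simpa [Pi.le_def] using hneg
  obtain ⟨p, -, hp⟩ := Finset.univ.exists_min_image (fun p => v p / w p) ⟨q, Finset.mem_univ q⟩
  set t := v p / w p
  have ht : t < 0 := (hp q (Finset.mem_univ q)).trans_lt (div_neg_of_neg_of_pos hq (hw q))
  have hterm : ∀ q, B p q * v q ≤ t * (B p q * w q) := by
    intro q
    rcases eq_or_ne p q with rfl | hpq
    · have hvp : v p = t * w p := (div_mul_cancel₀ _ (hw p).ne').symm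
      exact (by rw [hvp]; ring : B p p * v p = t * (B p p * w p)).le
    · nlinarith [hoff p q hpq, (le_div_iff₀ (hw q)).mp (hp q (Finset.mem_univ q))]
  have hBvp : (B *ᵥ v) p ≤ t * (B *ᵥ w) p := by
    simp only [mulVec, dotProduct, Finset.mul_sum]
    exact Finset.sum_le_sum fun q _ => hterm q
  have hBvp0 : 0 ≤ (B *ᵥ v) p := hBv p
  linarith [mul_neg_of_neg_of_pos ht (hBw p)]

end NonnegMatrix

lemma exists_nonneg_lt_one_le_smul {ι : Type*} [Finite ι] {a b : ι → ℝ} (hb : ∀ p, 0 < b p)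
    (hab : ∀ p, a p < b p) : ∃ θ : ℝ, 0 ≤ θ ∧ θ < 1 ∧ a ≤ θ • b := by
  cases isEmpty_or_nonempty ι
  · exact ⟨0, le_rfl, zero_lt_one, isEmptyElim⟩
  obtain ⟨p, hp⟩ := Finite.exists_max fun p => a p / b p
  refine ⟨max (a p / b p) 0, le_max_right _ _,
    max_lt ((div_lt_one (hb p)).mpr (hab p)) zero_lt_one, fun q => ?_⟩
  calc a q = a q / b q * b q := (div_mul_cancel₀ _ (hb q).ne').symm
    _ ≤ max (a p / b p) 0 * b q :=
      mul_le_mul_of_nonneg_right ((hp q).trans (le_max_left _ _)) (hb q).le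

lemma Matrix.inv_diagonal_of_ne_zero {ι K : Type*} [Fintype ι] [DecidableEq ι] [Field K]
    {d : ι → K} (hd : ∀ p, d p ≠ 0) : (diagonal d)⁻¹ = diagonal d⁻¹ :=
  inv_eq_left_inv (by rw [diagonal_mul_diagonal]; simp [hd])

lemma Matrix.exists_mulVec_eq_smul_of_mem_spectrum {ι K : Type*} [Fintype ι] [DecidableEq ι]
    [Field K] {A : Matrix ι ι K} {μ : K} (hμ : μ ∈ spectrum K A) :
    ∃ v : ι → K, v ≠ 0 ∧ A *ᵥ v = μ • v := by
  rw [← spectrum_toLin', ← Module.End.hasEigenvalue_iff_mem_spectrum] at hμ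
  obtain ⟨v, hv⟩ := hμ.exists_hasEigenvector
  exact ⟨v, hv.2, by simpa using hv.apply_eq_smul⟩

section FinMatrix

variable {n : ℕ}

lemma isMMat_of_mulVec_pos {B : Matrix (Fin n) (Fin n) ℝ} (hoff : ∀ p q, p ≠ q → B p q ≤ 0)
    {w : Fin n → ℝ} (hw : ∀ p, 0 < w p) (hBw : ∀ p, 0 < (B *ᵥ w) p) : IsMMat B := by
  have hinj : ∀ v, B *ᵥ v = 0 → v = 0 := fun v hv => le_antisymm
    (neg_nonneg.mp (nonneg_of_mulVec_nonneg hoff hw hBw (by simp [mulVec_neg, hv])))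
    (nonneg_of_mulVec_nonneg hoff hw hBw hv.ge)
  have hdet : IsUnit B.det := isUnit_iff_ne_zero.mpr fun h => by
    obtain ⟨v, hv0, hv⟩ := exists_mulVec_eq_zero_iff.mpr h
    exact hv0 (hinj v hv)
  refine ⟨hoff, hdet, fun p q => ?_⟩
  have hcol : 0 ≤ B⁻¹ *ᵥ Pi.single q 1 := by
    refine nonneg_of_mulVec_nonneg hoff hw hBw ?_
    rw [mulVec_mulVec, mul_nonsing_inv _ hdet, one_mulVec]
    exact Pi.single_nonneg.mpr zero_le_one
  simpa [mulVec_single] using hcol p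

lemma IsMMat.exists_pos_mulVec_pos {B : Matrix (Fin n) (Fin n) ℝ} (hB : IsMMat B) :
    ∃ w : Fin n → ℝ, (∀ p, 0 < w p) ∧ ∀ p, 0 < (B *ᵥ w) p := by
  obtain ⟨-, hdet, hinv⟩ := hB
  refine ⟨B⁻¹ *ᵥ 1, fun p => ?_, fun p => by simp [mulVec_mulVec, mul_nonsing_inv _ hdet]⟩
  have hrow : B⁻¹ p ≠ 0 := fun h => by
    simpa [mul_apply, h] using congrFun (congrFun (nonsing_inv_mul B hdet) p) p
  obtain ⟨q, hq⟩ := Function.ne_iff.mp hrow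
  exact Finset.sum_pos' (fun r _ => by simpa using hinv p r)
    ⟨q, Finset.mem_univ q, by simpa using (hinv p q).lt_of_ne' hq⟩

lemma IsHMat.isMMat_cmpMat_of_le {A M N : Matrix (Fin n) (Fin n) ℝ} (hA : IsHMat A)
    (hcmp : ∀ p q, cmpMat A p q ≤ cmpMat M p q - absMat N p q) : IsMMat (cmpMat M) := by
  obtain ⟨w, hw, hAw⟩ := IsMMat.exists_pos_mulVec_pos hA
  have hoff : ∀ p q, p ≠ q → cmpMat M p q ≤ 0 := fun p q hpq => by
    simp [cmpMat, hpq]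
  refine isMMat_of_mulVec_pos hoff hw fun p => (hAw p).trans_le ?_
  calc (cmpMat A *ᵥ w) p ≤ ((cmpMat M - absMat N) *ᵥ w) p := by
        simp only [mulVec, dotProduct]
        exact Finset.sum_le_sum fun q _ => mul_le_mul_of_nonneg_right (hcmp p q) (hw q).le
    _ ≤ (cmpMat M *ᵥ w) p := by
        rw [sub_mulVec, Pi.sub_apply, sub_le_self_iff]
        simp only [mulVec, dotProduct, absMat, of_apply]
        exact Finset.sum_nonneg fun q _ => mul_nonneg (abs_nonneg (N p q)) (hw q).le

lemma diag_pos_of_cmpMat_le {A M N : Matrix (Fin n) (Fin n) ℝ} (hsplit : A = M - N) {p : Fin n}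
    (hA : 0 < A p p) (hcmp : cmpMat A p p ≤ cmpMat M p p - absMat N p p) : 0 < M p p := by
  have hMp : M p p = A p p + N p p := by rw [hsplit, Matrix.sub_apply, sub_add_cancel]
  simp only [cmpMat, absMat, of_apply, if_true, abs_of_pos hA] at hcmp
  by_contra! hM
  linarith [abs_of_nonpos hM, neg_abs_le (N p p)]

lemma specRad_nonneg (J : Matrix (Fin n) (Fin n) ℝ) : 0 ≤ specRad J :=
  Real.sSup_nonneg (by rintro r ⟨μ, -, rfl⟩; exact norm_nonneg μ)

lemma norm_le_of_mem_spectrum {J : Matrix (Fin n) (Fin n) ℝ} {w : Fin n → ℝ}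
    (hw : ∀ p, 0 < w p) {θ : ℝ} (hJw : absMat J *ᵥ w ≤ θ • w) {μ : ℂ}
    (hμ : μ ∈ spectrum ℂ (J.map Complex.ofReal)) : ‖μ‖ ≤ θ := by
  obtain ⟨v, hv0, hv⟩ := exists_mulVec_eq_smul_of_mem_spectrum hμ
  obtain ⟨p, hp⟩ := Function.ne_iff.mp hv0
  refine le_of_mulVec_le_smul_of_smul_le_mulVec (fun p q => abs_nonneg (J p q)) hw hJw
    (c := fun p => ‖v p‖) (fun p => norm_nonneg _)
    (Function.ne_iff.mpr ⟨p, by simpa using hp⟩) fun p => ?_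
  calc ‖μ‖ * ‖v p‖ = ‖(J.map Complex.ofReal *ᵥ v) p‖ := by simp [hv]
    _ ≤ ∑ q, ‖(J p q : ℂ) * v q‖ := by
      simp only [mulVec, dotProduct, map_apply]; exact norm_sum_le _ _
    _ = (absMat J *ᵥ fun q => ‖v q‖) p := by simp [absMat, mulVec, dotProduct]

lemma specRad_le_of_absMat_mulVec_le {J : Matrix (Fin n) (Fin n) ℝ} {w : Fin n → ℝ}
    (hw : ∀ p, 0 < w p) {θ : ℝ} (hθ : 0 ≤ θ) (hJw : absMat J *ᵥ w ≤ θ • w) : specRad J ≤ θ :=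
  Real.sSup_le (by rintro r ⟨μ, hμ, rfl⟩; exact norm_le_of_mem_spectrum hw hJw hμ) hθ

lemma absMat_jacobi {A : Matrix (Fin n) (Fin n) ℝ} (hA : ∀ p, 0 < A p p) :
    absMat ((diagonal fun p => A p p)⁻¹ * (diagonal (fun p => A p p) - A)) =
      (diagonal fun p => A p p)⁻¹ * (diagonal (fun p => A p p) - cmpMat A) := by
  ext p q
  rw [inv_diagonal_of_ne_zero fun p => (hA p).ne']
  by_cases h : p = q
  · subst h; simp [absMat, cmpMat, abs_of_pos (hA p)]
  · simp [absMat, cmpMat, h, abs_mul, abs_of_pos (hA p)]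

lemma specRad_jacobi_lt_one {A : Matrix (Fin n) (Fin n) ℝ} (hA : IsHpMat A) :
    specRad ((diagonal fun p => A p p)⁻¹ * (diagonal (fun p => A p p) - A)) < 1 := by
  obtain ⟨w, hw, hAw⟩ := hA.1.exists_pos_mulVec_pos
  have hJw : ∀ p, (absMat ((diagonal fun p => A p p)⁻¹ * (diagonal (fun p => A p p) - A)) *ᵥ w) p
      < w p := fun p => by
    rw [absMat_jacobi hA.2, inv_diagonal_of_ne_zero fun p => (hA.2 p).ne', ← mulVec_mulVec,
      mulVec_diagonal, sub_mulVec, Pi.sub_apply, mulVec_diagonal, Pi.inv_apply,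
      inv_mul_lt_iff₀ (hA.2 p)]
    linarith [hAw p]
  obtain ⟨θ, hθ0, hθ1, hθ⟩ := exists_nonneg_lt_one_le_smul hw hJw
  exact (specRad_le_of_absMat_mulVec_le hw hθ0 hθ).trans_lt hθ1

lemma SolvesLCP.mulVec_apply_eq_of_pos {M : Matrix (Fin n) (Fin n) ℝ} {f x : Fin n → ℝ}
    (hx : SolvesLCP M f x) {p : Fin n} (hp : 0 < x p) : (M *ᵥ x) p = f p := by
  obtain ⟨hx0, hMx, hcomp⟩ := hx
  have hterm := (Finset.sum_eq_zero_iff_of_nonneg fun q _ =>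
    mul_nonneg (hx0 q) (sub_nonneg.mpr (hMx q))).mp hcomp p (Finset.mem_univ p)
  linarith [(mul_eq_zero.mp hterm).resolve_left hp.ne']

lemma SolvesLCP.of_sub {M N : Matrix (Fin n) (Fin n) ℝ} {f x : Fin n → ℝ}
    (hx : SolvesLCP (M - N) f x) : SolvesLCP M (f + N *ᵥ x) x := by
  obtain ⟨hx0, hMx, hcomp⟩ := hx
  refine ⟨hx0, fun p => ?_, ?_⟩
  · have := hMx p
    simp only [sub_mulVec, Pi.sub_apply] at this
    simp only [Pi.add_apply]
    linarith
  · rw [← hcomp]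
    congr 1 with p
    simp only [sub_mulVec, Pi.sub_apply, Pi.add_apply]
    ring

lemma cmpMat_mulVec_abs_apply_le {M : Matrix (Fin n) (Fin n) ℝ} {d : Fin n → ℝ} {p : Fin n}
    (hM : 0 ≤ M p p) (hd : 0 ≤ d p) : (cmpMat M *ᵥ |d|) p ≤ (M *ᵥ d) p := by
  simp only [mulVec, dotProduct, Pi.abs_apply]
  refine Finset.sum_le_sum fun q _ => ?_
  rcases eq_or_ne p q with rfl | hpq
  · simp [cmpMat, abs_of_nonneg hM, abs_of_nonneg hd]
  · simpa [cmpMat, hpq, abs_mul] using neg_abs_le (M p q * d q)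

/-- Where `u p > v p`, complementarity forces `(M *ᵥ u) p = f p`, while `(M *ᵥ v) p ≥ g p`. -/
lemma SolvesLCP.cmpMat_mulVec_abs_sub_apply_le_of_lt {M : Matrix (Fin n) (Fin n) ℝ}
    {f g u v : Fin n → ℝ} (hu : SolvesLCP M f u) (hv : SolvesLCP M g v) {p : Fin n}
    (hM : 0 ≤ M p p) (hp : v p < u p) : (cmpMat M *ᵥ |u - v|) p ≤ f p - g p :=
  calc (cmpMat M *ᵥ |u - v|) p ≤ (M *ᵥ (u - v)) p :=
        cmpMat_mulVec_abs_apply_le hM (sub_nonneg.mpr hp.le)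
    _ = (M *ᵥ u) p - (M *ᵥ v) p := by rw [mulVec_sub, Pi.sub_apply]
    _ ≤ f p - g p := by
        rw [hu.mulVec_apply_eq_of_pos ((hv.1 p).trans_lt hp)]
        linarith [hv.2.1 p]

lemma SolvesLCP.cmpMat_mulVec_abs_sub_le {M : Matrix (Fin n) (Fin n) ℝ} (hM : ∀ p, 0 ≤ M p p)
    {f g u v : Fin n → ℝ} (hu : SolvesLCP M f u) (hv : SolvesLCP M g v) :
    cmpMat M *ᵥ |u - v| ≤ |f - g| := by
  intro p
  rcases lt_trichotomy (v p) (u p) with h | h | h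
  · exact (hu.cmpMat_mulVec_abs_sub_apply_le_of_lt hv (hM p) h).trans (le_abs_self (f p - g p))
  · have h1 := cmpMat_mulVec_abs_apply_le (hM p) (d := u - v) (by simp [h])
    have h2 := cmpMat_mulVec_abs_apply_le (hM p) (d := v - u) (by simp [h])
    rw [abs_sub_comm v u] at h2
    simp only [mulVec_sub, Pi.sub_apply] at h1 h2
    exact (by linarith : _ ≤ (0 : ℝ)).trans (abs_nonneg (f p - g p))
  · rw [abs_sub_comm u v]
    exact (hv.cmpMat_mulVec_abs_sub_apply_le_of_lt hu (hM p) h).trans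
      (neg_sub (f p) (g p) ▸ neg_le_abs (f p - g p))

lemma abs_mulVec_le_absMat_mulVec (N : Matrix (Fin n) (Fin n) ℝ) (d : Fin n → ℝ) :
    |N *ᵥ d| ≤ absMat N *ᵥ |d| := fun p => by
  simp only [Pi.abs_apply, mulVec, dotProduct, absMat, of_apply, ← abs_mul]
  exact Finset.abs_sum_le_sum_abs _ _

lemma SolvesLCP.abs_sub_le_mulVec {M N : Matrix (Fin n) (Fin n) ℝ} (hM : IsMMat (cmpMat M))
    (hMd : ∀ p, 0 ≤ M p p) {f y z u v : Fin n → ℝ} (hu : SolvesLCP M (f + N *ᵥ y) u)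
    (hv : SolvesLCP M (f + N *ᵥ z) v) :
    |u - v| ≤ ((cmpMat M)⁻¹ * absMat N) *ᵥ |y - z| := by
  have hcmp : cmpMat M *ᵥ |u - v| ≤ absMat N *ᵥ |y - z| := by
    refine (hu.cmpMat_mulVec_abs_sub_le hMd hv).trans ?_
    rw [add_sub_add_left_eq_sub, ← mulVec_sub]
    exact abs_mulVec_le_absMat_mulVec N (y - z)
  calc |u - v| = (cmpMat M)⁻¹ *ᵥ (cmpMat M *ᵥ |u - v|) := by
        rw [mulVec_mulVec, nonsing_inv_mul _ hM.2.1, one_mulVec]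
    _ ≤ (cmpMat M)⁻¹ *ᵥ (absMat N *ᵥ |y - z|) := mulVec_le_mulVec_of_nonneg hM.2.2 hcmp
    _ = ((cmpMat M)⁻¹ * absMat N) *ᵥ |y - z| := mulVec_mulVec _ _ _

lemma sum_abs_le_infNorm (A : Matrix (Fin n) (Fin n) ℝ) (p : Fin n) :
    ∑ q, |A p q| ≤ infNorm A :=
  le_ciSup (f := fun p => ∑ q, |A p q|) (Finite.bddAbove_range _) p

lemma norm_le_infNorm_mul_of_abs_le_mulVec {A : Matrix (Fin n) (Fin n) ℝ} {u v : Fin n → ℝ}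
    (huv : |u| ≤ A *ᵥ |v|) : ‖u‖ ≤ infNorm A * ‖v‖ := by
  have hA : 0 ≤ infNorm A :=
    Real.iSup_nonneg fun p => Finset.sum_nonneg fun q _ => abs_nonneg (A p q)
  refine (pi_norm_le_iff_of_nonneg (mul_nonneg hA (norm_nonneg v))).mpr fun p => ?_
  calc ‖u p‖ ≤ ∑ q, A p q * |v q| := huv p
    _ ≤ ∑ q, |A p q| * ‖v‖ := Finset.sum_le_sum fun q _ =>
        mul_le_mul (le_abs_self _) (norm_le_pi_norm v q) (abs_nonneg _) (abs_nonneg _)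
    _ = (∑ q, |A p q|) * ‖v‖ := (Finset.sum_mul _ _ _).symm
    _ ≤ infNorm A * ‖v‖ := mul_le_mul_of_nonneg_right (sum_abs_le_infNorm A p) (norm_nonneg v)

lemma norm_lcp_sweep_sub_le {M N : Matrix (Fin n) (Fin n) ℝ} (hM : IsMMat (cmpMat M))
    (hMd : ∀ p, 0 ≤ M p p) {f xstar : Fin n → ℝ} (hxstar : SolvesLCP M (f + N *ᵥ xstar) xstar)
    {y : ℕ → Fin n → ℝ} {s : ℕ}
    (hy : ∀ j, 1 ≤ j → j ≤ s → SolvesLCP M (fun p => f p + (N *ᵥ y (j - 1)) p) (y j)) :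
    ‖y s - xstar‖ ≤ infNorm (((cmpMat M)⁻¹ * absMat N) ^ s) * ‖y 0 - xstar‖ := by
  have hT : ∀ p q, 0 ≤ ((cmpMat M)⁻¹ * absMat N) p q := fun p q => by
    rw [mul_apply]
    exact Finset.sum_nonneg fun r _ => mul_nonneg (hM.2.2 p r) (abs_nonneg _)
  refine norm_le_infNorm_mul_of_abs_le_mulVec
    (le_pow_mulVec_of_le_mulVec hT (e := fun j => |y j - xstar|) fun j hj => ?_)
  exact (hy (j + 1) j.succ_pos hj).abs_sub_le_mulVec hM hMd hxstar

lemma one_le_sum_infNorm {κ : Type*} [Fintype κ] [Nonempty (Fin n)]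
    {E : κ → Matrix (Fin n) (Fin n) ℝ} (hEsum : ∑ i, E i = 1) : 1 ≤ ∑ i, infNorm (E i) := by
  obtain ⟨p⟩ := ‹Nonempty (Fin n)›
  calc (1 : ℝ) = ∑ i, E i p p := by
        simpa [Matrix.sum_apply] using (congrFun (congrFun hEsum p) p).symm
    _ ≤ ∑ i, infNorm (E i) := Finset.sum_le_sum fun i _ =>
        (le_abs_self _).trans <| (Finset.single_le_sum (fun q _ => abs_nonneg (E i p q))
          (Finset.mem_univ p)).trans (sum_abs_le_infNorm (E i) p)

end FinMatrix

section DiagonalPartition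

variable {κ ι : Type*} [Fintype κ] [Fintype ι] [DecidableEq ι] {E : κ → Matrix ι ι ℝ}

lemma norm_sum_mulVec_le_of_diagonal_partition (hEdiag : ∀ i p q, p ≠ q → E i p q = 0)
    (hEnn : ∀ i p, 0 ≤ E i p p) (hEsum : ∑ i, E i = 1) {z : κ → ι → ℝ} {C : ℝ} (hC : 0 ≤ C)
    (hz : ∀ i, ‖z i‖ ≤ C) : ‖∑ i, E i *ᵥ z i‖ ≤ C := by
  refine (pi_norm_le_iff_of_nonneg hC).mpr fun p => ?_
  have hEp : ∀ i v, (E i *ᵥ v) p = E i p p * v p := fun i v =>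
    Finset.sum_eq_single p (fun q _ hq => by simp [hEdiag i p q hq.symm]) (by simp)
  have hsum : ∑ i, E i p p = 1 := by
    simpa [Matrix.sum_apply] using congrFun (congrFun hEsum p) p
  calc ‖(∑ i, E i *ᵥ z i) p‖ = |∑ i, E i p p * z i p| := by simp [Finset.sum_apply, hEp]
    _ ≤ ∑ i, E i p p * |z i p| := (Finset.abs_sum_le_sum_abs _ _).trans_eq
        (Finset.sum_congr rfl fun i _ => by rw [abs_mul, abs_of_nonneg (hEnn i p)])
    _ ≤ ∑ i, E i p p * C := Finset.sum_le_sum fun i _ =>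
        mul_le_mul_of_nonneg_left ((norm_le_pi_norm (z i) p).trans (hz i)) (hEnn i p)
    _ = C := by rw [← Finset.sum_mul, hsum, one_mul]

lemma norm_relaxed_combination_sub_le (hEdiag : ∀ i p q, p ≠ q → E i p q = 0)
    (hEnn : ∀ i p, 0 ≤ E i p p) (hEsum : ∑ i, E i = 1) {ω : ℝ} (hω : 0 ≤ ω)
    {a x : ι → ℝ} {z : κ → ι → ℝ} {C : ℝ} (hC : 0 ≤ C) (hz : ∀ i, ‖z i - a‖ ≤ C) :
    ‖ω • (∑ i, E i *ᵥ z i) + (1 - ω) • x - a‖ ≤ ω * C + |1 - ω| * ‖x - a‖ := by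
  have hEa : ∑ i, E i *ᵥ a = a := by rw [← sum_mulVec, hEsum, one_mulVec]
  have hid : ω • (∑ i, E i *ᵥ z i) + (1 - ω) • x - a =
      ω • (∑ i, E i *ᵥ (z i - a)) + (1 - ω) • (x - a) := by
    simp only [mulVec_sub, Finset.sum_sub_distrib, hEa]
    module
  rw [hid]
  refine (norm_add_le _ _).trans ?_
  rw [norm_smul, norm_smul, Real.norm_of_nonneg hω, Real.norm_eq_abs]
  gcongr
  exact norm_sum_mulVec_le_of_diagonal_partition hEdiag hEnn hEsum hC hz

end DiagonalPartition

lemma relaxation_factor_lt_one {γ ω : ℝ} (hγ0 : 0 ≤ γ) (hγ1 : γ < 1) (hω0 : 0 < ω)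
    (hω : ω < 2 / (1 + γ)) : ω * γ + |1 - ω| < 1 := by
  rw [lt_div_iff₀ (by linarith)] at hω
  rcases le_total ω 1 with h | h
  · rw [abs_of_nonneg (sub_nonneg.mpr h)]
    nlinarith [mul_pos hω0 (sub_pos.mpr hγ1)]
  · rw [abs_of_nonpos (sub_nonpos.mpr h)]
    linarith

lemma tendsto_of_norm_sub_le_mul {E : Type*} [SeminormedAddCommGroup E] {x : ℕ → E} {a : E}
    {θ : ℝ} (hθ0 : 0 ≤ θ) (hθ1 : θ < 1) (h : ∀ k, ‖x (k + 1) - a‖ ≤ θ * ‖x k - a‖) :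
    Tendsto x atTop (𝓝 a) := by
  rw [tendsto_iff_norm_sub_tendsto_zero]
  refine squeeze_zero (fun k => norm_nonneg _)
    (fun k => le_geom (u := fun k => ‖x k - a‖) hθ0 k fun j _ => h j) ?_
  simpa using (tendsto_pow_atTop_nhds_zero_of_lt_one hθ0 hθ1).mul_const ‖x 0 - a‖

theorem sync_relaxed_nonstationary_multisplitting_converges_general {n m : ℕ}
    (A : Matrix (Fin n) (Fin n) ℝ) (f xstar : Fin n → ℝ)
    (hA : IsHpMat A)
    (γ : ℝ)
    (hγ : γ = specRad ((Matrix.diagonal fun p => A p p)⁻¹ *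
      (Matrix.diagonal (fun p => A p p) - A)))
    (ω : ℝ) (hω : 0 < ω ∧ ω < 2 / (1 + γ))
    (M N : Fin m → Matrix (Fin n) (Fin n) ℝ)
    (hsplit : ∀ i, A = M i - N i)
    (hcmp : ∀ i, ∀ p q, cmpMat A p q ≤ cmpMat (M i) p q - absMat (N i) p q)
    (E : Fin m → Matrix (Fin n) (Fin n) ℝ)
    (hEdiag : ∀ i p q, p ≠ q → E i p q = 0)
    (hEnn : ∀ i p, 0 ≤ E i p p)
    (hEsum : ∑ i, E i = 1)
    (η : ℝ) (hη : η = γ / ∑ i, infNorm (E i))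
    (st : ℕ)
    (hnorm : ∀ i, ∀ s, st ≤ s →
      infNorm (((cmpMat (M i))⁻¹ * absMat (N i)) ^ s) ≤ η)
    (hxstar : SolvesLCP A f xstar)
    (s : ℕ → Fin m → ℕ) (hs : ∀ k i, st ≤ s k i)
    (x : ℕ → Fin n → ℝ) (y : ℕ → Fin m → ℕ → Fin n → ℝ)
    (hy0 : ∀ k i, y k i 0 = x k)
    (hy : ∀ k i j, 1 ≤ j → j ≤ s k i →
      SolvesLCP (M i) (fun p => f p + (N i *ᵥ y k i (j - 1)) p) (y k i j))
    (hx : ∀ k, x (k + 1) = ω • (∑ i, E i *ᵥ y k i (s k i)) + (1 - ω) • x k) :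
    Filter.Tendsto x Filter.atTop (nhds xstar) := by
  cases isEmpty_or_nonempty (Fin n)
  · exact tendsto_const_nhds.congr fun k => Subsingleton.elim _ _
  have hγ0 : 0 ≤ γ := hγ ▸ specRad_nonneg _
  have hγ1 : γ < 1 := hγ ▸ specRad_jacobi_lt_one hA
  have hηγ : η ≤ γ := hη ▸ div_le_self hγ0 (one_le_sum_infNorm hEsum)
  have hsweep : ∀ k i, ‖y k i (s k i) - xstar‖ ≤ γ * ‖x k - xstar‖ := fun k i => calc
    ‖y k i (s k i) - xstar‖ ≤
        infNorm (((cmpMat (M i))⁻¹ * absMat (N i)) ^ s k i) * ‖y k i 0 - xstar‖ :=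
      norm_lcp_sweep_sub_le (hA.1.isMMat_cmpMat_of_le (hcmp i))
        (fun p => (diag_pos_of_cmpMat_le (hsplit i) (hA.2 p) (hcmp i p p)).le)
        (SolvesLCP.of_sub (hsplit i ▸ hxstar)) (hy k i)
    _ ≤ γ * ‖x k - xstar‖ := by
      rw [hy0]
      gcongr
      exact (hnorm i _ (hs k i)).trans hηγ
  refine tendsto_of_norm_sub_le_mul (add_nonneg (mul_nonneg hω.1.le hγ0) (abs_nonneg _))
    (relaxation_factor_lt_one hγ0 hγ1 hω.1 hω.2) fun k => ?_
  calc ‖x (k + 1) - xstar‖ ≤ ω * (γ * ‖x k - xstar‖) + |1 - ω| * ‖x k - xstar‖ := by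
        rw [hx k]
        exact norm_relaxed_combination_sub_le hEdiag hEnn hEsum hω.1.le
          (mul_nonneg hγ0 (norm_nonneg _)) (hsweep k)
    _ = (ω * γ + |1 - ω|) * ‖x k - xstar‖ := by ring

/-- Theorem 2.1: convergence of the synchronous relaxed nonstationary
multisplitting method for LCP with an H₊-matrix. -/
theorem sync_relaxed_nonstationary_multisplitting_converges {n m : ℕ}
    (A : Matrix (Fin n) (Fin n) ℝ) (f xstar : Fin n → ℝ)
    (hA : IsHpMat A)
    (γ : ℝ)
    (hγ : γ = specRad ((Matrix.diagonal fun p => A p p)⁻¹ *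
      (Matrix.diagonal (fun p => A p p) - A)))
    (ω : ℝ) (hω : 0 < ω ∧ ω < 2 / (1 + γ))
    (M N : Fin m → Matrix (Fin n) (Fin n) ℝ)
    (hsplit : ∀ i, A = M i - N i)
    (hcmp : ∀ i, ∀ p q, cmpMat A p q ≤ cmpMat (M i) p q - absMat (N i) p q)
    (E : Fin m → Matrix (Fin n) (Fin n) ℝ)
    (hEdiag : ∀ i p q, p ≠ q → E i p q = 0)
    (hEnn : ∀ i p, 0 ≤ E i p p)
    (hEsum : ∑ i, E i = 1)
    (η : ℝ) (hη : η = γ / ∑ i, infNorm (E i))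
    (st : ℕ) (hst : 0 < st)
    (hnorm : ∀ i, ∀ s, st ≤ s →
      infNorm (((cmpMat (M i))⁻¹ * absMat (N i)) ^ s) ≤ η)
    (hxstar : SolvesLCP A f xstar)
    (s : ℕ → Fin m → ℕ) (hs : ∀ k i, st ≤ s k i)
    (x : ℕ → Fin n → ℝ) (y : ℕ → Fin m → ℕ → Fin n → ℝ)
    (hy0 : ∀ k i, y k i 0 = x k)
    (hy : ∀ k i j, 1 ≤ j → j ≤ s k i →
      SolvesLCP (M i) (fun p => f p + (N i *ᵥ y k i (j - 1)) p) (y k i j))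
    (hx : ∀ k, x (k + 1) = ω • (∑ i, E i *ᵥ y k i (s k i)) + (1 - ω) • x k) :
    Filter.Tendsto x Filter.atTop (nhds xstar) :=
  sync_relaxed_nonstationary_multisplitting_converges_general A f xstar hA γ hγ ω hω M N hsplit hcmp
    E hEdiag hEnn hEsum η hη st hnorm hxstar s hs x y hy0 hy hx
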